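/- arXiv:1608.01467 — 3 statements merged into one kernel-verified Lean document; each statement's English description precedes it below -/
import Mathlib

section
/- If f : X → Y is continuous and I is a good rate function on X, then I^{(f)}(y) = inf{I(x) : f(x) = y} is a good rate function on Y (nonnegative, lower semicontinuous, with compact sublevel sets), and for any set A ⊂ Y, inf_{y∈A} I^{(f)}(y) = inf_{x∈f^{-1}(A)} I(x). -/
open scoped ENNReal

/-- A lower semicontinuous function with compact sublevel sets attains its infimum over
each fiber of a continuous map (to a T2 space). -/
lemma attain_fiber_inf
    {X Y : Type*} [TopologicalSpace X] [TopologicalSpace Y] [T2Space Y]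
    (f : X → Y) (hf : Continuous f) (hsurj : Function.Surjective f)
    (I : X → ℝ≥0∞) (hlsc : LowerSemicontinuous I)
    (hgood : ∀ α : ℝ, IsCompact {x | I x ≤ ENNReal.ofReal α}) (y : Y) :
    ∃ x, f x = y ∧ I x = ⨅ x ∈ f ⁻¹' {y}, I x := by
  set c : ℝ≥0∞ := ⨅ x ∈ f ⁻¹' {y}, I x with hc
  rcases eq_or_ne c ⊤ with htop | htop
  · obtain ⟨x, hx⟩ := hsurj y
    refine ⟨x, hx, ?_⟩
    have hle : c ≤ I x := biInf_le I (by simp [hx])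
    rw [htop] at hle ⊢
    exact top_le_iff.mp hle
  · -- c < ∞ : use a sequence of compact sets
    have hfiber_closed : IsClosed (f ⁻¹' {y}) := (isClosed_singleton).preimage hf
    have hcompact : ∀ t : ℝ≥0∞, t ≠ ⊤ → IsCompact {x | I x ≤ t} := by
      intro t ht
      have := hgood t.toReal
      rwa [ENNReal.ofReal_toReal ht] at this
    set K : ℕ → Set X := fun n => f ⁻¹' {y} ∩ {x | I x ≤ c + (↑(n + 1) : ℝ≥0∞)⁻¹} with hK
    have hKfin : ∀ n : ℕ, c + (↑(n + 1) : ℝ≥0∞)⁻¹ ≠ ⊤ := by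
      intro n
      apply ENNReal.add_ne_top.mpr
      exact ⟨htop, by simp⟩
    have hKclosed : ∀ n, IsClosed (K n) := fun n =>
      hfiber_closed.inter (hlsc.isClosed_preimage _)
    have hKcompact0 : IsCompact (K 0) :=
      (hcompact _ (hKfin 0)).of_isClosed_subset (hKclosed 0) Set.inter_subset_right
    have hKmono : ∀ n : ℕ, K (n + 1) ⊆ K n := by
      intro n x hx
      simp only [hK, Set.mem_inter_iff, Set.mem_setOf_eq] at hx ⊢
      refine ⟨hx.1, le_trans hx.2 ?_⟩
      gcongr
      omega
    have hKne : ∀ n : ℕ, (K n).Nonempty := by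
      intro n
      have hlt : c < c + (↑(n + 1) : ℝ≥0∞)⁻¹ :=
        ENNReal.lt_add_right htop (by simp)
      by_contra h
      rw [Set.not_nonempty_iff_eq_empty] at h
      have hge : c + (↑(n + 1) : ℝ≥0∞)⁻¹ ≤ c := by
        conv_rhs => rw [hc]
        refine le_iInf₂ fun x hx => ?_
        by_contra hlt'
        push_neg at hlt'
        have : x ∈ K n := ⟨hx, hlt'.le⟩
        simp [h] at this
      exact absurd hge (not_le.mpr hlt)
    have hinter := IsCompact.nonempty_iInter_of_sequence_nonempty_isCompact_isClosed
      K hKmono hKne hKcompact0 hKclosed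
    obtain ⟨x, hx⟩ := hinter
    simp only [Set.mem_iInter, hK, Set.mem_inter_iff, Set.mem_preimage,
      Set.mem_singleton_iff, Set.mem_setOf_eq] at hx
    have hfx : f x = y := (hx 0).1
    refine ⟨x, hfx, le_antisymm ?_ (biInf_le I (by simp [hfx]))⟩
    apply ENNReal.le_of_forall_pos_le_add
    intro ε hε _
    obtain ⟨n, hn⟩ := ENNReal.exists_inv_nat_lt (a := (ε : ℝ≥0∞)) (by simpa using hε.ne')
    calc I x ≤ c + (↑(n + 1) : ℝ≥0∞)⁻¹ := (hx n).2
      _ ≤ c + (↑n : ℝ≥0∞)⁻¹ := by gcongr; omega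
      _ ≤ c + ε := by gcongr

/-- If `f : X → Y` is continuous (and surjective) between Polish spaces and `I` is a good
rate function on `X`, then `I^{(f)}(y) = inf {I(x) : f(x) = y}` is a good rate function on
`Y` (lower semicontinuous with compact sublevel sets; nonnegativity is built into `ℝ≥0∞`),
and for every `A ⊆ Y`, `inf_{y ∈ A} I^{(f)}(y) = inf_{x ∈ f⁻¹(A)} I(x)`. -/
theorem contracted_rate_function_good
    {X Y : Type*} [TopologicalSpace X] [PolishSpace X] [TopologicalSpace Y] [PolishSpace Y]
    (f : X → Y) (hf : Continuous f) (hsurj : Function.Surjective f)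
    (I : X → ℝ≥0∞) (hlsc : LowerSemicontinuous I)
    (hgood : ∀ α : ℝ, IsCompact {x | I x ≤ ENNReal.ofReal α}) :
    LowerSemicontinuous (fun y => ⨅ x ∈ f ⁻¹' {y}, I x) ∧
    (∀ α : ℝ, IsCompact {y | (⨅ x ∈ f ⁻¹' {y}, I x) ≤ ENNReal.ofReal α}) ∧
    (∀ A : Set Y, (⨅ y ∈ A, ⨅ x ∈ f ⁻¹' {y}, I x) = ⨅ x ∈ f ⁻¹' A, I x) := by
  have attain := attain_fiber_inf f hf hsurj I hlsc hgood
  set J : Y → ℝ≥0∞ := fun y => ⨅ x ∈ f ⁻¹' {y}, I x with hJ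
  have key : ∀ c : ℝ≥0∞, c ≠ ⊤ → {y | J y ≤ c} = f '' {x | I x ≤ c} := by
    intro c hc
    ext y
    constructor
    · intro hy
      obtain ⟨x, hx, hIx⟩ := attain y
      exact ⟨x, by rw [Set.mem_setOf_eq, hIx]; exact hy, hx⟩
    · rintro ⟨x, hx, rfl⟩
      exact le_trans (biInf_le I (by simp)) hx
  have hcompact : ∀ α : ℝ, IsCompact {y | J y ≤ ENNReal.ofReal α} := by
    intro α
    rw [key _ ENNReal.ofReal_ne_top]
    exact (hgood α).image hf
  refine ⟨?_, hcompact, ?_⟩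
  · rw [lowerSemicontinuous_iff_isClosed_preimage]
    intro c
    rcases eq_or_ne c ⊤ with rfl | hc
    · simp [Set.preimage, Set.Iic]
    · have : J ⁻¹' Set.Iic c = {y | J y ≤ ENNReal.ofReal c.toReal} := by
        rw [ENNReal.ofReal_toReal hc]; rfl
      rw [this]
      exact (hcompact c.toReal).isClosed
  · intro A
    apply le_antisymm
    · refine le_iInf₂ fun x hx => ?_
      exact le_trans (iInf₂_le (f x) hx) (biInf_le I (by simp))
    · refine le_iInf₂ fun y hy => le_iInf₂ fun x hx => ?_
      exact biInf_le I (by simpa using hx.symm ▸ hy)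
end

section
/- Cramér lower bound via tilting: let ξ be a real random variable with everywhere finite cumulant generating function Λ(λ) = log E[e^{λξ}] and whose support is all of ℝ. For x ∈ ℝ, let λ_x satisfy Λ'(λ_x) = x and set I(x) = xλ_x - Λ(λ_x). Then for S_n the sum of n iid copies of ξ, lim_{δ→0} liminf_{n→∞} (1/n) log P(S_n/n ∈ (x-δ, x+δ)) = -I(x). -/
/-!
Tilt `P` by the density `exp (λ Sₙ - Λₙ(λ))`, where `Sₙ = X₀ + ⋯ + Xₙ₋₁`, `λ = lx` and
`Λₙ = cgf Sₙ = n Λ`. Under the tilted law `Sₙ` has mean `n Λ'(λ) = n x` and variance `n Λ''(λ)`,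
so by Chebyshev the tilted probability `qₙ` of `{|Sₙ/n - x| < δ}` tends to `1`. On that event the
density lies within a factor `exp (± n |λ| δ)` of `exp (n I(x))`, whence
`qₙ exp (-n (I(x) + |λ| δ)) ≤ P (|Sₙ/n - x| < δ) ≤ exp (-n (I(x) - |λ| δ))`:
the `liminf` is within `|λ| δ` of `-I(x)`, and `δ → 0` gives the claim.
-/

open MeasureTheory ProbabilityTheory Filter Topology
open Real Set

lemma abs_liminf_inv_mul_log_add_le {p q : ℕ → ℝ} {b r : ℝ} (hq : Tendsto q atTop (𝓝 1))
    (hlow : ∀ᶠ n : ℕ in atTop, q n ≤ exp (n * (b + r)) * p n)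
    (hupp : ∀ᶠ n : ℕ in atTop, exp (n * (b - r)) * p n ≤ 1) :
    |liminf (fun n : ℕ => (n : ℝ)⁻¹ * log (p n)) atTop + b| ≤ r := by
  set l : ℕ → ℝ := fun n => (n : ℝ)⁻¹ * log (q n) - (b + r)
  have hl : Tendsto l atTop (𝓝 (-(b + r))) := by
    have := (tendsto_inv_atTop_nhds_zero_nat (𝕜 := ℝ)).mul
      ((continuousAt_log one_ne_zero).tendsto.comp hq)
    simpa [l] using this.sub_const (b + r)
  have hbounds : ∀ᶠ n : ℕ in atTop,
      l n ≤ (n : ℝ)⁻¹ * log (p n) ∧ (n : ℝ)⁻¹ * log (p n) ≤ r - b := by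
    filter_upwards [hlow, hupp, hq.eventually (lt_mem_nhds one_pos), eventually_ge_atTop 1]
      with n hlow hupp hq_pos hn
    have hn : (0 : ℝ) < n := by exact_mod_cast hn
    have hp : 0 < p n := pos_of_mul_pos_right (hq_pos.trans_le hlow) (exp_pos _).le
    have hlog_low : log (q n) ≤ n * (b + r) + log (p n) := by
      simpa [log_mul (exp_pos _).ne' hp.ne'] using log_le_log hq_pos hlow
    have hlog_upp : n * (b - r) + log (p n) ≤ 0 := by
      simpa [log_mul (exp_pos _).ne' hp.ne'] using log_nonpos (by positivity) hupp
    constructor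
    · calc l n ≤ (n : ℝ)⁻¹ * (n * (b + r) + log (p n)) - (b + r) := by simp only [l]; gcongr
        _ = (n : ℝ)⁻¹ * log (p n) := by field_simp; ring
    · rw [inv_mul_le_iff₀ hn]; linarith
  have hu_ge : IsBoundedUnder (· ≥ ·) atTop fun n : ℕ => (n : ℝ)⁻¹ * log (p n) :=
    hl.isBoundedUnder_ge.mono_ge (hbounds.mono fun _ h => h.1)
  rw [abs_le]
  constructor
  · have := liminf_le_liminf (hbounds.mono fun _ h => h.1) hl.isBoundedUnder_ge
      (isCoboundedUnder_ge_of_eventually_le atTop (hbounds.mono fun _ h => h.2))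
    rw [hl.liminf_eq] at this
    linarith
  · have := liminf_le_of_frequently_le (hbounds.mono fun _ h => h.2).frequently hu_ge
    linarith

lemma tendsto_nhdsGT_zero_of_abs_sub_le {f : ℝ → ℝ} {a C : ℝ}
    (h : ∀ δ > 0, |f δ - a| ≤ C * δ) : Tendsto f (𝓝[>] 0) (𝓝 a) := by
  rw [tendsto_iff_norm_sub_tendsto_zero]
  refine squeeze_zero' (Eventually.of_forall fun _ => norm_nonneg _) ?_ ?_ (g := fun δ => C * δ)
  · filter_upwards [self_mem_nhdsWithin] with δ hδ using h δ hδ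
  · simpa using ((continuous_const_mul C).tendsto 0).mono_left nhdsWithin_le_nhds

section Tilting

variable {Ω : Type*} [MeasurableSpace Ω] {μ : Measure Ω} [IsFiniteMeasure μ] {Y : Ω → ℝ}
  {A : Set Ω} {t m r : ℝ}

lemma measureReal_tilted_mul_eq_setIntegral (ht : Integrable (fun ω => exp (t * Y ω)) μ)
    (A : Set Ω) :
    (μ.tilted (t * Y ·)).real A = ∫ ω in A, exp (t * Y ω - cgf Y μ t) ∂μ := by
  rw [measureReal_def, tilted_mul_apply_eq_ofReal_integral_cgf A ht,
    ENNReal.toReal_ofReal (setIntegral_nonneg_of_ae (Eventually.of_forall fun _ => (exp_pos _).le))]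

lemma measureReal_tilted_mul_le (ht : Integrable (fun ω => exp (t * Y ω)) μ)
    (hA : MeasurableSet A) (hAY : ∀ ω ∈ A, |Y ω - m| < r) :
    (μ.tilted (t * Y ·)).real A ≤ exp (t * m - cgf Y μ t + |t| * r) * μ.real A := by
  rw [measureReal_tilted_mul_eq_setIntegral ht, mul_comm, ← smul_eq_mul, ← setIntegral_const]
  refine setIntegral_mono_on ?_ (integrableOn_const (measure_ne_top μ A)) hA fun ω hω => ?_
  · simpa only [exp_sub] using (ht.div_const (exp (cgf Y μ t))).integrableOn
  · have h : |t * Y ω - t * m| ≤ |t| * r := by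
      rw [← mul_sub, abs_mul]; gcongr; exact (hAY ω hω).le
    exact exp_le_exp.mpr (by linarith [(abs_le.mp h).2])

lemma exp_mul_measureReal_le_tilted_mul (ht : Integrable (fun ω => exp (t * Y ω)) μ)
    (hA : MeasurableSet A) (hAY : ∀ ω ∈ A, |Y ω - m| < r) :
    exp (t * m - cgf Y μ t - |t| * r) * μ.real A ≤ (μ.tilted (t * Y ·)).real A := by
  rw [measureReal_tilted_mul_eq_setIntegral ht, mul_comm, ← smul_eq_mul, ← setIntegral_const]
  refine setIntegral_mono_on (integrableOn_const (measure_ne_top μ A)) ?_ hA fun ω hω => ?_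
  · simpa only [exp_sub] using (ht.div_const (exp (cgf Y μ t))).integrableOn
  · have h : |t * Y ω - t * m| ≤ |t| * r := by
      rw [← mul_sub, abs_mul]; gcongr; exact (hAY ω hω).le
    exact exp_le_exp.mpr (by linarith [(abs_le.mp h).1])

end Tilting

lemma tendsto_measureReal_div_mem_Ioo_of_variance {Ω : Type*} [MeasurableSpace Ω]
    {μ : ℕ → Measure Ω} [∀ n, IsProbabilityMeasure (μ n)] {Y : ℕ → Ω → ℝ} {x v δ : ℝ}
    (hδ : 0 < δ) (hL2 : ∀ n, MemLp (Y n) 2 (μ n)) (hmean : ∀ n, (μ n)[Y n] = n * x)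
    (hvar : ∀ n, Var[Y n; μ n] = n * v) :
    Tendsto (fun n : ℕ => (μ n).real {ω | Y n ω / n ∈ Ioo (x - δ) (x + δ)}) atTop (𝓝 1) := by
  have hlim : Tendsto (fun n : ℕ => 1 - v / δ ^ 2 * (n : ℝ)⁻¹) atTop (𝓝 1) := by
    simpa using (tendsto_inv_atTop_nhds_zero_nat (𝕜 := ℝ)).const_mul (v / δ ^ 2) |>.const_sub 1
  refine tendsto_of_tendsto_of_tendsto_of_le_of_le' hlim tendsto_const_nhds ?_
    (Eventually.of_forall fun n => measureReal_le_one)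
  filter_upwards [eventually_ge_atTop 1] with n hn
  have hn : (0 : ℝ) < n := by exact_mod_cast hn
  set A := {ω | Y n ω / n ∈ Ioo (x - δ) (x + δ)}
  set B := {ω | n * δ ≤ |Y n ω - (μ n)[Y n]|}
  have hcover : 1 ≤ (μ n).real A + (μ n).real B := by
    refine (probReal_univ (μ := μ n)).symm.le.trans
      ((measureReal_mono fun ω _ => ?_).trans (measureReal_union_le A B))
    by_cases hω : ω ∈ A
    · exact Or.inl hω
    right
    simp only [A, B, mem_ofPred_eq, mem_Ioo, not_and_or, not_lt, hmean] at hω ⊢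
    rw [le_abs]
    rcases hω with h | h
    · right; rw [div_le_iff₀ hn] at h; linarith
    · left; rw [le_div_iff₀ hn] at h; linarith
  have hB : (μ n).real B ≤ v / δ ^ 2 * (n : ℝ)⁻¹ := by
    have hcheb := ENNReal.toReal_le_of_le_ofReal (by positivity [variance_nonneg (Y n) (μ n)])
      (meas_ge_le_variance_div_sq (hL2 n) (by positivity : 0 < n * δ))
    calc (μ n).real B ≤ Var[Y n; μ n] / (n * δ) ^ 2 := hcheb
      _ = v / δ ^ 2 * (n : ℝ)⁻¹ := by rw [hvar]; field_simp
  linarith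

lemma abs_sub_mul_lt_of_div_mem_Ioo {s x δ n : ℝ} (hn : 0 < n) (h : s / n ∈ Ioo (x - δ) (x + δ)) :
    |s - n * x| < n * δ := by
  obtain ⟨hlow, hupp⟩ := h
  rw [lt_div_iff₀ hn] at hlow
  rw [div_lt_iff₀ hn] at hupp
  rw [abs_sub_lt_iff]
  constructor <;> linarith

section IIDSum

variable {Ω : Type*} [MeasurableSpace Ω] {P : Measure Ω} {ξ : Ω → ℝ} {X : ℕ → Ω → ℝ}

lemma cgf_sum_range_of_identDistrib (hX : ∀ i, Measurable (X i)) (hindep : iIndepFun X P)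
    (hid : ∀ i, IdentDistrib (X i) ξ P P) (n : ℕ) :
    cgf (fun ω => ∑ i ∈ Finset.range n, X i ω) P = fun t => n * cgf ξ P t := by
  ext t
  rw [← Finset.sum_fn, cgf, hindep.mgf_sum hX,
    Finset.prod_congr rfl fun i _ => mgf_congr_of_identDistrib _ _ (hid i) t, Finset.prod_const,
    Finset.card_range, log_pow, cgf]

lemma integrableExpSet_subset_sum_range_of_identDistrib [IsProbabilityMeasure P]
    (hX : ∀ i, Measurable (X i)) (hindep : iIndepFun X P) (hid : ∀ i, IdentDistrib (X i) ξ P P)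
    (n : ℕ) :
    integrableExpSet ξ P ⊆ integrableExpSet (fun ω => ∑ i ∈ Finset.range n, X i ω) P := by
  intro t ht
  have := hindep.integrable_exp_mul_sum hX (s := Finset.range n) fun i _ =>
    ((hid i).comp (measurable_const_mul t).exp).integrable_iff.mpr ht
  simp only [Finset.sum_apply] at this
  exact this

lemma measurableSet_sum_range_div_mem (hX : ∀ i, Measurable (X i)) (n : ℕ) {s : Set ℝ}
    (hs : MeasurableSet s) : MeasurableSet {ω | (∑ i ∈ Finset.range n, X i ω) / n ∈ s} :=
  (Finset.measurable_sum _ fun i _ => hX i).div_const _ hs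

variable [IsProbabilityMeasure P] (hX : ∀ i, Measurable (X i)) (hindep : iIndepFun X P)
  (hid : ∀ i, IdentDistrib (X i) ξ P P) (hint : ∀ t, Integrable (fun ω => exp (t * ξ ω)) P)
include hX hindep hid hint

lemma mem_interior_integrableExpSet_sum_range (n : ℕ) (t : ℝ) :
    t ∈ interior (integrableExpSet (fun ω => ∑ i ∈ Finset.range n, X i ω) P) := by
  refine interior_mono (integrableExpSet_subset_sum_range_of_identDistrib hX hindep hid n) ?_
  rw [show integrableExpSet ξ P = univ from eq_univ_of_forall hint, interior_univ]
  trivial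

lemma integrable_exp_mul_sum_range (n : ℕ) (t : ℝ) :
    Integrable (fun ω => exp (t * ∑ i ∈ Finset.range n, X i ω)) P :=
  interior_subset (s := integrableExpSet _ P)
    (mem_interior_integrableExpSet_sum_range hX hindep hid hint n t)

lemma isProbabilityMeasure_tilted_sum_range (n : ℕ) (t : ℝ) :
    IsProbabilityMeasure (P.tilted (t * ∑ i ∈ Finset.range n, X i ·)) :=
  isProbabilityMeasure_tilted (integrable_exp_mul_sum_range hX hindep hid hint n t)

lemma integral_tilted_sum_range (n : ℕ) {x t : ℝ} (hΛ : HasDerivAt (cgf ξ P) x t) :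
    (P.tilted (t * ∑ i ∈ Finset.range n, X i ·))[fun ω => ∑ i ∈ Finset.range n, X i ω] =
      n * x := by
  rw [integral_tilted_mul_self (mem_interior_integrableExpSet_sum_range hX hindep hid hint n t),
    cgf_sum_range_of_identDistrib hX hindep hid n]
  exact (hΛ.const_mul _).deriv

lemma variance_tilted_sum_range (n : ℕ) (t : ℝ) :
    Var[fun ω => ∑ i ∈ Finset.range n, X i ω; P.tilted (t * ∑ i ∈ Finset.range n, X i ·)] =
      n * iteratedDeriv 2 (cgf ξ P) t := by
  rw [variance_tilted_mul (mem_interior_integrableExpSet_sum_range hX hindep hid hint n t),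
    cgf_sum_range_of_identDistrib hX hindep hid n, iteratedDeriv_const_mul_field]

lemma tendsto_measureReal_tilted_sum_range {x t δ : ℝ} (hΛ : HasDerivAt (cgf ξ P) x t)
    (hδ : 0 < δ) :
    Tendsto (fun n : ℕ => (P.tilted (t * ∑ i ∈ Finset.range n, X i ·)).real
      {ω | (∑ i ∈ Finset.range n, X i ω) / n ∈ Ioo (x - δ) (x + δ)}) atTop (𝓝 1) :=
  have := fun n => isProbabilityMeasure_tilted_sum_range hX hindep hid hint n t
  tendsto_measureReal_div_mem_Ioo_of_variance hδ
    (fun n => memLp_tilted_mul (mem_interior_integrableExpSet_sum_range hX hindep hid hint n t) 2)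
    (integral_tilted_sum_range hX hindep hid hint · hΛ)
    (variance_tilted_sum_range hX hindep hid hint · t)

variable {n : ℕ} (hn : 0 < n) (x t δ : ℝ)
include hn

lemma measureReal_tilted_sum_range_le :
    (P.tilted (t * ∑ i ∈ Finset.range n, X i ·)).real
        {ω | (∑ i ∈ Finset.range n, X i ω) / n ∈ Ioo (x - δ) (x + δ)} ≤
      exp (n * (x * t - cgf ξ P t + |t| * δ)) *
        P.real {ω | (∑ i ∈ Finset.range n, X i ω) / n ∈ Ioo (x - δ) (x + δ)} := by
  convert measureReal_tilted_mul_le (integrable_exp_mul_sum_range hX hindep hid hint n t)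
    (measurableSet_sum_range_div_mem hX n measurableSet_Ioo)
    fun ω => abs_sub_mul_lt_of_div_mem_Ioo (x := x) (δ := δ) (Nat.cast_pos.mpr hn) using 3
  rw [cgf_sum_range_of_identDistrib hX hindep hid n]
  ring

lemma exp_mul_measureReal_sum_range_le_one :
    exp (n * (x * t - cgf ξ P t - |t| * δ)) *
      P.real {ω | (∑ i ∈ Finset.range n, X i ω) / n ∈ Ioo (x - δ) (x + δ)} ≤ 1 := by
  have := isProbabilityMeasure_tilted_sum_range hX hindep hid hint n t
  refine (le_of_eq ?_).trans ((exp_mul_measureReal_le_tilted_mul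
    (integrable_exp_mul_sum_range hX hindep hid hint n t)
    (measurableSet_sum_range_div_mem hX n measurableSet_Ioo)
    fun ω => abs_sub_mul_lt_of_div_mem_Ioo (x := x) (δ := δ) (Nat.cast_pos.mpr hn)).trans
    measureReal_le_one)
  rw [cgf_sum_range_of_identDistrib hX hindep hid n]
  congr 2
  ring

end IIDSum

theorem cramer_lower_bound_tilting_general
    {Ω : Type*} [MeasurableSpace Ω] (P : Measure Ω) [IsProbabilityMeasure P]
    (ξ : Ω → ℝ) (hξ : Measurable ξ)
    (X : ℕ → Ω → ℝ) (hX : ∀ i, Measurable (X i))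
    (hindep : iIndepFun X P)
    (hident : ∀ i, P.map (X i) = P.map ξ)
    (hint : ∀ l : ℝ, Integrable (fun ω => Real.exp (l * ξ ω)) P)
    (x lx : ℝ)
    (hlx : HasDerivAt (fun l : ℝ => Real.log (∫ ω, Real.exp (l * ξ ω) ∂P)) x lx) :
    Tendsto
      (fun δ : ℝ =>
        Filter.liminf
          (fun n : ℕ => (n : ℝ)⁻¹ *
            Real.log
              ((P {ω | (∑ i ∈ Finset.range n, X i ω) / n ∈ Set.Ioo (x - δ) (x + δ)}).toReal))
          atTop)
      (𝓝[>] (0:ℝ))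
      (𝓝 (-(x * lx - Real.log (∫ ω, Real.exp (lx * ξ ω) ∂P)))) := by
  have hid (i : ℕ) : IdentDistrib (X i) ξ P P := ⟨(hX i).aemeasurable, hξ.aemeasurable, hident i⟩
  refine tendsto_nhdsGT_zero_of_abs_sub_le (C := |lx|) fun δ hδ => ?_
  rw [sub_neg_eq_add]
  exact abs_liminf_inv_mul_log_add_le
    (tendsto_measureReal_tilted_sum_range hX hindep hid hint hlx hδ)
    ((eventually_gt_atTop 0).mono fun n hn =>
      measureReal_tilted_sum_range_le hX hindep hid hint hn x lx δ)
    ((eventually_gt_atTop 0).mono fun n hn =>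
      exp_mul_measureReal_sum_range_le_one hX hindep hid hint hn x lx δ)

/-- Cramér lower bound via tilting: let `ξ` be a real random variable with everywhere
finite cumulant generating function `Λ(λ) = log E[e^{λξ}]` whose law charges every
nonempty open set (support is all of `ℝ`), let `X_i` be iid copies of `ξ`, and for
`x ∈ ℝ` let `λ_x` satisfy `Λ'(λ_x) = x`, `I(x) = xλ_x - Λ(λ_x)`.  Then
`lim_{δ→0⁺} liminf_n (1/n) log P(S_n/n ∈ (x-δ,x+δ)) = -I(x)`. -/
theorem cramer_lower_bound_tilting
    {Ω : Type*} [MeasurableSpace Ω] (P : Measure Ω) [IsProbabilityMeasure P]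
    (ξ : Ω → ℝ) (hξ : Measurable ξ)
    (X : ℕ → Ω → ℝ) (hX : ∀ i, Measurable (X i))
    (hindep : iIndepFun X P)
    (hident : ∀ i, P.map (X i) = P.map ξ)
    (hint : ∀ l : ℝ, Integrable (fun ω => Real.exp (l * ξ ω)) P)
    (hsupp : ∀ s : Set ℝ, IsOpen s → s.Nonempty → 0 < P.map ξ s)
    (x lx : ℝ)
    (hlx : HasDerivAt (fun l : ℝ => Real.log (∫ ω, Real.exp (l * ξ ω) ∂P)) x lx) :
    Tendsto
      (fun δ : ℝ =>
        Filter.liminf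
          (fun n : ℕ => (n : ℝ)⁻¹ *
            Real.log
              ((P {ω | (∑ i ∈ Finset.range n, X i ω) / n ∈ Set.Ioo (x - δ) (x + δ)}).toReal))
          atTop)
      (𝓝[>] (0:ℝ))
      (𝓝 (-(x * lx - Real.log (∫ ω, Real.exp (lx * ξ ω) ∂P)))) :=
  cramer_lower_bound_tilting_general P ξ hξ X hX hindep hident hint x lx hlx
end

section
/- Convergence of discretized entropies: with μ, ν, π_j as above, lim_{j→∞} H(ν | π_j(μ)) = H(ν | μ). In particular the limit is independent of the singular part of μ. -/
/-!
Write `H_j = H(ν | π_j μ)`. On each dyadic arc the density of `π_j μ` is at least the mean of `w`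
there, so Jensen's inequality for `log`, applied arc by arc, gives `H_j ≤ H(ν | μ)`. Conversely the
density of `π_j μ` tends to `w` almost everywhere by Lebesgue differentiation, the singular part of
`μ` having derivative zero, and `H(ν | ·)` is lower semicontinuous along a.e. convergent densities
of bounded mass: Fatou's lemma handles the negative part of `log`, while the positive part grows
sublinearly, hence is uniformly integrable, so mass escaping into the singular part of `μ` carries
no entropy.
-/

open MeasureTheory
open scoped ENNReal Classical

/-- The reverse relative entropy `H(ν|μ) = -∫ log w dν` of normalized Lebesgue measure `ν`
with respect to a measure with a.c. density `w`, valued in the extended reals: it is `+∞`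
unless `w > 0` a.e. and `log w` is integrable. -/
noncomputable def Hrev (ν : Measure ℝ) (w : ℝ → ℝ) : EReal :=
  if (∀ᵐ θ ∂ν, 0 < w θ) ∧ Integrable (fun θ => Real.log (w θ)) ν
    then ((-(∫ θ, Real.log (w θ) ∂ν) : ℝ) : EReal) else (⊤ : EReal)

/-- The `k`-th dyadic arc of generation `j` on the circle parametrized by `[0,2π)`. -/
def dyadicArc (j k : ℕ) : Set ℝ :=
  Set.Ico (2 * Real.pi * k / 2 ^ j) (2 * Real.pi * (k + 1) / 2 ^ j)

/-- The density of the discretization `π_j(μ)`: constant value `2^j μ(I_k^{(j)})` on each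
dyadic arc `I_k^{(j)}` of generation `j`. -/
noncomputable def discretizedDensity (μ : Measure ℝ) (j : ℕ) (θ : ℝ) : ℝ :=
  ∑ k ∈ Finset.range (2 ^ j),
    Set.indicator (dyadicArc j k) (fun _ => (2 : ℝ) ^ j * (μ (dyadicArc j k)).toReal) θ

open Filter Set Topology Function

lemma Real.log_le_min_add_exp_neg_mul {t M : ℝ} (ht : 0 ≤ t) (hM : 0 ≤ M) :
    Real.log t ≤ min (Real.log t) M + Real.exp (-M) * t := by
  rcases le_total (Real.log t) M with h | h
  · rw [min_eq_left h]
    have := Real.exp_pos (-M)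
    nlinarith
  · rw [min_eq_right h]
    rcases ht.eq_or_lt with rfl | ht
    · simp only [Real.log_zero] at h ⊢
      linarith
    have := Real.log_le_sub_one_of_pos (mul_pos (Real.exp_pos (-M)) ht)
    rw [Real.log_mul (Real.exp_pos _).ne' ht.ne', Real.log_exp] at this
    linarith

lemma Real.log_le_log_add_div_sub_one {t c : ℝ} (ht : 0 < t) (hc : 0 < c) :
    Real.log t ≤ Real.log c + t / c - 1 := by
  have := Real.log_le_sub_one_of_pos (div_pos ht hc)
  rw [Real.log_div ht.ne' hc.ne'] at this
  linarith

lemma continuous_ofReal_log : Continuous fun t => ENNReal.ofReal (Real.log t) := by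
  have h (t : ℝ) : ENNReal.ofReal (Real.log t) = ENNReal.ofReal (Real.posLog t) := by
    rw [Real.posLog, ENNReal.ofReal_max, ENNReal.ofReal_zero, max_eq_right zero_le]
  exact (ENNReal.continuous_ofReal.comp Real.continuous_posLog).congr fun t => (h t).symm

lemma ENNReal.ofReal_abs_eq_add (x : ℝ) :
    ENNReal.ofReal |x| = ENNReal.ofReal x + ENNReal.ofReal (-x) := by
  rcases le_total x 0 with h | h
  · rw [abs_of_nonpos h, ENNReal.ofReal_of_nonpos h, zero_add]
  · rw [abs_of_nonneg h, ENNReal.ofReal_of_nonpos (neg_nonpos.2 h), add_zero]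

lemma integrable_of_lintegral_ofReal_ne_top {α : Type*} [MeasurableSpace α] {ν : Measure α}
    {g : α → ℝ} (hg : AEStronglyMeasurable g ν) (hpos : ∫⁻ x, ENNReal.ofReal (g x) ∂ν ≠ ⊤)
    (hneg : ∫⁻ x, ENNReal.ofReal (-g x) ∂ν ≠ ⊤) : Integrable g ν := by
  refine ⟨hg, ?_⟩
  simp only [HasFiniteIntegral, Real.enorm_eq_ofReal_abs, ENNReal.ofReal_abs_eq_add]
  rw [lintegral_add_left' hg.aemeasurable.ennreal_ofReal]
  exact ENNReal.add_lt_top.2 ⟨hpos.lt_top, hneg.lt_top⟩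

section SetIntegral

variable {α : Type*} [MeasurableSpace α] {ν : Measure α} {s : Set α} {f : α → ℝ}

lemma setIntegral_pos_of_ae_pos (hs0 : ν s ≠ 0) (hf : ∀ᵐ x ∂ν.restrict s, 0 < f x)
    (hfi : IntegrableOn f s ν) : 0 < ∫ x in s, f x ∂ν := by
  rw [integral_pos_iff_support_of_nonneg_ae (hf.mono fun x hx => hx.le) hfi, pos_iff_ne_zero]
  intro h0
  have : ∀ᵐ x ∂ν.restrict s, False := by
    filter_upwards [hf, measure_eq_zero_iff_ae_notMem.1 h0] with x hx hx' using hx' hx.ne'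
  exact hs0 (by simpa using this)

lemma setIntegral_log_le {c : ℝ} (hs : ν s ≠ ⊤) (hc : 0 < c) (hf : ∀ᵐ x ∂ν.restrict s, 0 < f x)
    (hfi : IntegrableOn f s ν) (hlog : IntegrableOn (fun x => Real.log (f x)) s ν)
    (hmass : ∫ x in s, f x ∂ν ≤ ν.real s * c) :
    ∫ x in s, Real.log (f x) ∂ν ≤ ν.real s * Real.log c := by
  have : Fact (ν s < ⊤) := ⟨hs.lt_top⟩
  calc ∫ x in s, Real.log (f x) ∂ν
      ≤ ∫ x in s, (Real.log c - 1 + c⁻¹ * f x) ∂ν := by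
        refine integral_mono_ae hlog ((integrable_const _).add (hfi.const_mul _)) ?_
        filter_upwards [hf] with x hx
        have := Real.log_le_log_add_div_sub_one hx hc
        rw [div_eq_inv_mul] at this
        linarith
    _ = ν.real s * (Real.log c - 1) + c⁻¹ * ∫ x in s, f x ∂ν := by
        rw [integral_add (integrable_const _) (hfi.const_mul _), setIntegral_const, smul_eq_mul,
          integral_const_mul]
    _ ≤ ν.real s * (Real.log c - 1) + c⁻¹ * (ν.real s * c) := by gcongr
    _ = ν.real s * Real.log c := by field_simp; ring

end SetIntegral

/-- `max 0 (-log t)`, and `⊤` for `t ≤ 0`; written through `ENNReal.log` so that continuity on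
all of `ℝ` is evident. -/
noncomputable def negLogPart (t : ℝ) : ℝ≥0∞ :=
  (-ENNReal.log (ENNReal.ofReal t)).toENNReal

lemma negLogPart_of_pos {t : ℝ} (ht : 0 < t) : negLogPart t = ENNReal.ofReal (-Real.log t) := by
  rw [negLogPart, ENNReal.log_ofReal_of_pos ht]
  rfl

lemma negLogPart_of_nonpos {t : ℝ} (ht : t ≤ 0) : negLogPart t = ⊤ := by
  simp [negLogPart, ENNReal.ofReal_eq_zero.2 ht]

lemma continuous_negLogPart : Continuous negLogPart :=
  EReal.continuous_toENNReal.comp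
    (continuous_neg.comp (ENNReal.continuous_log.comp ENNReal.continuous_ofReal))

lemma measurable_negLogPart : Measurable negLogPart := continuous_negLogPart.measurable

lemma Hrev_eq_sub {ν : Measure ℝ} {f : ℝ → ℝ} (hf : AEMeasurable f ν)
    (hP : ∫⁻ θ, ENNReal.ofReal (Real.log (f θ)) ∂ν ≠ ⊤) :
    Hrev ν f = (∫⁻ θ, negLogPart (f θ) ∂ν : EReal) - ∫⁻ θ, ENNReal.ofReal (Real.log (f θ)) ∂ν := by
  have top_sub (P : ℝ≥0∞) (hP : P ≠ ⊤) : (⊤ : EReal) = (⊤ : ℝ≥0∞) - (P : EReal) := by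
    lift P to NNReal using hP
    exact (EReal.top_sub_coe P).symm
  by_cases hpos : ∀ᵐ θ ∂ν, 0 < f θ
  · have hN : ∫⁻ θ, negLogPart (f θ) ∂ν = ∫⁻ θ, ENNReal.ofReal (-Real.log (f θ)) ∂ν :=
      lintegral_congr_ae (hpos.mono fun θ h => negLogPart_of_pos h)
    have hlog : AEStronglyMeasurable (fun θ => Real.log (f θ)) ν :=
      (Real.measurable_log.comp_aemeasurable hf).aestronglyMeasurable
    by_cases hint : Integrable (fun θ => Real.log (f θ)) ν
    · have hNfin : ∫⁻ θ, ENNReal.ofReal (-Real.log (f θ)) ∂ν ≠ ⊤ := hint.neg.lintegral_lt_top.ne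
      rw [Hrev, if_pos ⟨hpos, hint⟩, hN, integral_eq_lintegral_pos_part_sub_lintegral_neg_part hint,
        ← EReal.coe_ennreal_toReal hP, ← EReal.coe_ennreal_toReal hNfin, ← EReal.coe_sub, neg_sub]
    · have hNtop : ∫⁻ θ, negLogPart (f θ) ∂ν = ⊤ := by
        rw [hN]
        by_contra hN
        exact hint (integrable_of_lintegral_ofReal_ne_top hlog hP hN)
      rw [Hrev, if_neg fun h => hint h.2, hNtop]
      exact top_sub _ hP
  · have hNtop : ∫⁻ θ, negLogPart (f θ) ∂ν = ⊤ := by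
      refine lintegral_eq_top_of_measure_eq_top_ne_zero
        (measurable_negLogPart.comp_aemeasurable hf)
        (measure_mono_null ?_ |>.mt (ae_iff.not.1 hpos))
      intro θ hθ
      exact negLogPart_of_nonpos (not_lt.1 hθ)
    rw [Hrev, if_neg fun h => hpos h.1, hNtop]
    exact top_sub _ hP

section Semicontinuity

variable {α : Type*} [MeasurableSpace α] {ν : Measure α}

lemma lintegral_le_liminf_of_tendsto_ae {F : ℕ → α → ℝ≥0∞} {G : α → ℝ≥0∞}
    (hF : ∀ j, AEMeasurable (F j) ν) (hlim : ∀ᵐ x ∂ν, Tendsto (fun j => F j x) atTop (𝓝 (G x))) :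
    ∫⁻ x, G x ∂ν ≤ liminf (fun j => ∫⁻ x, F j x ∂ν) atTop :=
  (lintegral_congr_ae (hlim.mono fun _ hx => hx.liminf_eq.symm)).trans_le
    (lintegral_liminf_le' hF)

lemma lintegral_ofReal_log_le_truncation {f : α → ℝ} (hf : AEMeasurable f ν)
    (hf0 : ∀ᵐ x ∂ν, 0 ≤ f x) {M : ℝ} (hM : 0 ≤ M) :
    ∫⁻ x, ENNReal.ofReal (Real.log (f x)) ∂ν
      ≤ ∫⁻ x, min (ENNReal.ofReal (Real.log (f x))) (ENNReal.ofReal M) ∂ν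
        + ENNReal.ofReal (Real.exp (-M)) * ∫⁻ x, ENNReal.ofReal (f x) ∂ν := by
  rw [← lintegral_const_mul' _ _ ENNReal.ofReal_ne_top,
    ← lintegral_add_right' _ (hf.ennreal_ofReal.const_mul _)]
  refine lintegral_mono_ae (hf0.mono fun x hx => ?_)
  rw [← ENNReal.ofReal_min, ← ENNReal.ofReal_mul (Real.exp_pos _).le]
  exact (ENNReal.ofReal_le_ofReal (Real.log_le_min_add_exp_neg_mul hx hM)).trans
    ENNReal.ofReal_add_le

lemma limsup_lintegral_ofReal_log_le [IsFiniteMeasure ν] {f : ℕ → α → ℝ} {g : α → ℝ} {C : ℝ≥0∞}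
    (hf : ∀ j, AEMeasurable (f j) ν) (hf0 : ∀ j, ∀ᵐ x ∂ν, 0 ≤ f j x)
    (hlim : ∀ᵐ x ∂ν, Tendsto (fun j => f j x) atTop (𝓝 (g x)))
    (hmass : ∀ j, ∫⁻ x, ENNReal.ofReal (f j x) ∂ν ≤ C) (hC : C ≠ ⊤) :
    limsup (fun j => ∫⁻ x, ENNReal.ofReal (Real.log (f j x)) ∂ν) atTop
      ≤ ∫⁻ x, ENNReal.ofReal (Real.log (g x)) ∂ν := by
  set P := ∫⁻ x, ENNReal.ofReal (Real.log (g x)) ∂ν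
  have bound (M : ℝ) (hM : 0 ≤ M) :
      limsup (fun j => ∫⁻ x, ENNReal.ofReal (Real.log (f j x)) ∂ν) atTop
        ≤ P + ENNReal.ofReal (Real.exp (-M)) * C := by
    set T : ℝ → ℝ≥0∞ := fun t => min (ENNReal.ofReal (Real.log t)) (ENNReal.ofReal M)
    have hT : Continuous T := continuous_ofReal_log.min continuous_const
    have htrunc : Tendsto (fun j => ∫⁻ x, T (f j x) ∂ν) atTop (𝓝 (∫⁻ x, T (g x) ∂ν)) := by
      refine tendsto_lintegral_of_dominated_convergence' (fun _ => ENNReal.ofReal M)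
        (fun j => hT.measurable.comp_aemeasurable (hf j))
        (fun j => ae_of_all _ fun x => min_le_right _ _) ?_
        (hlim.mono fun x hx => (hT.tendsto _).comp hx)
      simp [lintegral_const, ENNReal.mul_eq_top]
    calc limsup (fun j => ∫⁻ x, ENNReal.ofReal (Real.log (f j x)) ∂ν) atTop
        ≤ limsup (fun j => ∫⁻ x, T (f j x) ∂ν + ENNReal.ofReal (Real.exp (-M)) * C) atTop := by
          refine limsup_le_limsup (Eventually.of_forall fun j => ?_)
          exact (lintegral_ofReal_log_le_truncation (hf j) (hf0 j) hM).trans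
            (add_le_add_right (mul_le_mul_right (hmass j) _) _)
      _ = ∫⁻ x, T (g x) ∂ν + ENNReal.ofReal (Real.exp (-M)) * C := (htrunc.add_const _).limsup_eq
      _ ≤ P + ENNReal.ofReal (Real.exp (-M)) * C := by
          gcongr
          exact lintegral_mono fun x => min_le_left _ _
  have hlimM : Tendsto (fun M : ℝ => P + ENNReal.ofReal (Real.exp (-M)) * C) atTop (𝓝 P) := by
    have h0 : Tendsto (fun M : ℝ => ENNReal.ofReal (Real.exp (-M))) atTop (𝓝 0) := by
      simpa [Function.comp_def] using
        (ENNReal.continuous_ofReal.tendsto 0).comp Real.tendsto_exp_neg_atTop_nhds_zero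
    simpa using tendsto_const_nhds.add (ENNReal.Tendsto.mul_const h0 (Or.inr hC))
  exact ge_of_tendsto hlimM ((eventually_ge_atTop 0).mono bound)

end Semicontinuity

lemma EReal.coe_sub_le_liminf_sub {a b : ℝ≥0∞} {u v : ℕ → ℝ≥0∞} (ha : a ≤ liminf u atTop)
    (hb : limsup v atTop ≤ b) :
    (a : EReal) - b ≤ liminf (fun j => (u j : EReal) - v j) atTop := by
  have hmono : Monotone ENNReal.toEReal := fun _ _ h => EReal.coe_ennreal_le_coe_ennreal_iff.2 h
  have hu : ((liminf u atTop : ℝ≥0∞) : EReal) = liminf (fun j => (u j : EReal)) atTop :=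
    hmono.map_liminf_of_continuousAt u continuous_coe_ennreal_ereal.continuousAt
  have hv : ((limsup v atTop : ℝ≥0∞) : EReal) = limsup (fun j => (v j : EReal)) atTop :=
    hmono.map_limsup_of_continuousAt v continuous_coe_ennreal_ereal.continuousAt
  calc (a : EReal) - b
      ≤ liminf (fun j => (u j : EReal)) atTop + -limsup (fun j => (v j : EReal)) atTop := by
        rw [sub_eq_add_neg, ← hu, ← hv]
        gcongr
        · exact EReal.coe_ennreal_le_coe_ennreal_iff.2 ha
        · exact EReal.neg_le_neg_iff.2 (EReal.coe_ennreal_le_coe_ennreal_iff.2 hb)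
    _ = liminf (fun j => (u j : EReal)) atTop + liminf (fun j => -(v j : EReal)) atTop := by
        rw [← EReal.liminf_neg]; rfl
    _ ≤ liminf (fun j => (u j : EReal) - v j) atTop := EReal.le_liminf_add

theorem Hrev_le_liminf {ν : Measure ℝ} [IsFiniteMeasure ν] {f : ℕ → ℝ → ℝ} {g : ℝ → ℝ}
    {C : ℝ≥0∞} (hf : ∀ j, AEMeasurable (f j) ν) (hf0 : ∀ j, ∀ᵐ x ∂ν, 0 ≤ f j x)
    (hlim : ∀ᵐ x ∂ν, Tendsto (fun j => f j x) atTop (𝓝 (g x)))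
    (hmass : ∀ j, ∫⁻ x, ENNReal.ofReal (f j x) ∂ν ≤ C) (hC : C ≠ ⊤) :
    Hrev ν g ≤ liminf (fun j => Hrev ν (f j)) atTop := by
  have hg : AEMeasurable g ν := aemeasurable_of_tendsto_metrizable_ae' hf hlim
  have hlog_le {h : ℝ → ℝ} (hh : ∀ᵐ x ∂ν, 0 ≤ h x) :
      ∫⁻ x, ENNReal.ofReal (Real.log (h x)) ∂ν ≤ ∫⁻ x, ENNReal.ofReal (h x) ∂ν :=
    lintegral_mono_ae (hh.mono fun x hx => ENNReal.ofReal_le_ofReal (Real.log_le_self hx))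
  have hPf (j : ℕ) : ∫⁻ x, ENNReal.ofReal (Real.log (f j x)) ∂ν ≠ ⊤ :=
    ((hlog_le (hf0 j)).trans (hmass j)).trans_lt hC.lt_top |>.ne
  have hPg : ∫⁻ x, ENNReal.ofReal (Real.log (g x)) ∂ν ≠ ⊤ := by
    have hg0 : ∀ᵐ x ∂ν, 0 ≤ g x := by
      filter_upwards [hlim, ae_all_iff.2 hf0] with x hx hx0 using ge_of_tendsto' hx hx0
    refine ((hlog_le hg0).trans ?_).trans_lt hC.lt_top |>.ne
    exact (lintegral_le_liminf_of_tendsto_ae (fun j => (hf j).ennreal_ofReal)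
      (hlim.mono fun x hx => (ENNReal.continuous_ofReal.tendsto _).comp hx)).trans
      (liminf_le_of_frequently_le' (Frequently.of_forall hmass))
  simp only [Hrev_eq_sub hg hPg, fun j => Hrev_eq_sub (hf j) (hPf j)]
  refine EReal.coe_sub_le_liminf_sub ?_ (limsup_lintegral_ofReal_log_le hf hf0 hlim hmass hC)
  exact lintegral_le_liminf_of_tendsto_ae (fun j => measurable_negLogPart.comp_aemeasurable (hf j))
    (hlim.mono fun x hx => (continuous_negLogPart.tendsto _).comp hx)

lemma Finset.sum_indicator_const_apply_of_mem {ι α M : Type*} [AddCommMonoid M] {s : Finset ι}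
    {A : ι → Set α} (hA : Pairwise (Disjoint on A)) (c : ι → M) {k : ι} (hk : k ∈ s) {x : α}
    (hx : x ∈ A k) : ∑ i ∈ s, (A i).indicator (fun _ => c i) x = c k := by
  rw [Finset.sum_eq_single_of_mem k hk fun i _ hik =>
    indicator_of_notMem (fun hi => Set.disjoint_left.1 (hA hik) hi hx) _, indicator_of_mem hx]

lemma Finset.apply_sum_indicator_const {ι α M N : Type*} [AddCommMonoid M] [AddCommMonoid N]
    {s : Finset ι} {A : ι → Set α} (hA : Pairwise (Disjoint on A)) (c : ι → M) {φ : M → N}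
    (hφ : φ 0 = 0) (x : α) :
    φ (∑ i ∈ s, (A i).indicator (fun _ => c i) x)
      = ∑ i ∈ s, (A i).indicator (fun _ => φ (c i)) x := by
  by_cases h : ∃ k ∈ s, x ∈ A k
  · obtain ⟨k, hk, hx⟩ := h
    rw [sum_indicator_const_apply_of_mem hA c hk hx, sum_indicator_const_apply_of_mem hA _ hk hx]
  · push Not at h
    simp only [Finset.sum_eq_zero fun i hi => indicator_of_notMem (h i hi) _, hφ]

section DyadicArcs

variable {j k : ℕ} {θ : ℝ}

noncomputable def dyadicIndex (j : ℕ) (θ : ℝ) : ℕ := ⌊θ * 2 ^ j / (2 * Real.pi)⌋₊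

lemma mem_dyadicArc_iff (hθ : 0 ≤ θ) : θ ∈ dyadicArc j k ↔ dyadicIndex j θ = k := by
  have h2π : 0 < 2 * Real.pi := by positivity
  have h2j : (0 : ℝ) < 2 ^ j := by positivity
  rw [dyadicArc, mem_Ico, dyadicIndex, Nat.floor_eq_iff (by positivity), le_div_iff₀ h2π,
    div_lt_iff₀ h2π, div_le_iff₀ h2j, lt_div_iff₀ h2j]
  constructor <;> rintro ⟨h1, h2⟩ <;> constructor <;> linarith

lemma mem_dyadicArc_dyadicIndex (hθ : 0 ≤ θ) : θ ∈ dyadicArc j (dyadicIndex j θ) :=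
  (mem_dyadicArc_iff hθ).2 rfl

lemma nonneg_of_mem_dyadicArc (hθ : θ ∈ dyadicArc j k) : 0 ≤ θ :=
  le_trans (by positivity) hθ.1

lemma pairwise_disjoint_dyadicArc (j : ℕ) : Pairwise (Disjoint on dyadicArc j) := by
  intro k l hkl
  refine Set.disjoint_left.2 fun θ hk hl => hkl ?_
  have h0 := nonneg_of_mem_dyadicArc hk
  exact ((mem_dyadicArc_iff h0).1 hk).symm.trans ((mem_dyadicArc_iff h0).1 hl)

lemma dyadicIndex_lt (hθ : θ ∈ Ico 0 (2 * Real.pi)) : dyadicIndex j θ < 2 ^ j := by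
  have h2π : 0 < 2 * Real.pi := by positivity
  rw [dyadicIndex, Nat.floor_lt (div_nonneg (mul_nonneg hθ.1 (by positivity)) h2π.le),
    div_lt_iff₀ h2π]
  push_cast
  nlinarith [hθ.2, pow_pos (two_pos : (0 : ℝ) < 2) j]

lemma biUnion_dyadicArc (j : ℕ) :
    ⋃ k ∈ Finset.range (2 ^ j), dyadicArc j k = Ico 0 (2 * Real.pi) := by
  ext θ
  simp only [mem_iUnion, Finset.mem_range, exists_prop]
  constructor
  · rintro ⟨k, hk, hθ⟩
    refine ⟨nonneg_of_mem_dyadicArc hθ, hθ.2.trans_le ?_⟩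
    rw [div_le_iff₀ (by positivity)]
    have : (k : ℝ) + 1 ≤ 2 ^ j := by exact_mod_cast hk
    nlinarith [Real.pi_pos]
  · exact fun hθ => ⟨_, dyadicIndex_lt hθ, mem_dyadicArc_dyadicIndex hθ.1⟩

lemma dyadicArc_subset (hk : k < 2 ^ j) : dyadicArc j k ⊆ Ico 0 (2 * Real.pi) :=
  biUnion_dyadicArc j ▸ subset_biUnion_of_mem (u := dyadicArc j) (Finset.mem_range.2 hk)

lemma measurableSet_dyadicArc (j k : ℕ) : MeasurableSet (dyadicArc j k) := measurableSet_Ico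

lemma volume_dyadicArc (j k : ℕ) :
    volume (dyadicArc j k) = ENNReal.ofReal (2 * Real.pi / 2 ^ j) := by
  rw [dyadicArc, Real.volume_Ico]
  congr 1
  ring

end DyadicArcs

/-- The measure `ν = dθ / 2π` on the circle `[0, 2π)`. -/
noncomputable def normalizedLebesgue : Measure ℝ :=
  (ENNReal.ofReal (2 * Real.pi))⁻¹ • volume.restrict (Ico 0 (2 * Real.pi))

instance : IsProbabilityMeasure normalizedLebesgue := by
  have h2π : ENNReal.ofReal (2 * Real.pi) ≠ 0 := ENNReal.ofReal_ne_zero_iff.2 (by positivity)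
  constructor
  rw [normalizedLebesgue, Measure.smul_apply, Measure.restrict_apply_univ, Real.volume_Ico,
    sub_zero, smul_eq_mul, ENNReal.inv_mul_cancel h2π ENNReal.ofReal_ne_top]

lemma ae_mem_normalizedLebesgue : ∀ᵐ θ ∂normalizedLebesgue, θ ∈ Ico 0 (2 * Real.pi) :=
  Measure.ae_smul_measure (ae_restrict_mem measurableSet_Ico) _

lemma normalizedLebesgue_absolutelyContinuous : normalizedLebesgue ≪ volume :=
  Measure.smul_absolutelyContinuous.trans Measure.restrict_le_self.absolutelyContinuous

lemma normalizedLebesgue_dyadicArc {j k : ℕ} (hk : k < 2 ^ j) :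
    normalizedLebesgue (dyadicArc j k) = ((2 : ℝ≥0∞) ^ j)⁻¹ := by
  rw [normalizedLebesgue, Measure.smul_apply, Measure.restrict_apply (measurableSet_dyadicArc j k),
    inter_eq_left.2 (dyadicArc_subset hk), volume_dyadicArc, smul_eq_mul,
    ENNReal.ofReal_div_of_pos (by positivity), ENNReal.ofReal_pow zero_le_two, ENNReal.ofReal_ofNat,
    div_eq_mul_inv, ← mul_assoc,
    ENNReal.inv_mul_cancel (ENNReal.ofReal_ne_zero_iff.2 (by positivity)) ENNReal.ofReal_ne_top,
    one_mul]

lemma normalizedLebesgue_real_dyadicArc {j k : ℕ} (hk : k < 2 ^ j) :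
    normalizedLebesgue.real (dyadicArc j k) = ((2 : ℝ) ^ j)⁻¹ := by
  rw [measureReal_def, normalizedLebesgue_dyadicArc hk, ENNReal.toReal_inv, ENNReal.toReal_pow]
  norm_num

lemma integral_eq_sum_dyadicArc {f : ℝ → ℝ} (hf : Integrable f normalizedLebesgue) (j : ℕ) :
    ∫ θ, f θ ∂normalizedLebesgue
      = ∑ k ∈ Finset.range (2 ^ j), ∫ θ in dyadicArc j k, f θ ∂normalizedLebesgue := by
  rw [← integral_biUnion_finset _ (fun k _ => measurableSet_dyadicArc j k)
    ((pairwise_disjoint_dyadicArc j).set_pairwise _) fun k _ => hf.integrableOn,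
    biUnion_dyadicArc, Measure.restrict_eq_self_of_ae_mem ae_mem_normalizedLebesgue]

section DiscretizedDensity

variable {μ : Measure ℝ} {j : ℕ}

lemma discretizedDensity_of_mem {k : ℕ} (hk : k < 2 ^ j) {θ : ℝ} (hθ : θ ∈ dyadicArc j k) :
    discretizedDensity μ j θ = 2 ^ j * (μ (dyadicArc j k)).toReal :=
  Finset.sum_indicator_const_apply_of_mem (pairwise_disjoint_dyadicArc j) _
    (Finset.mem_range.2 hk) hθ

lemma apply_discretizedDensity {M : Type*} [AddCommMonoid M] {φ : ℝ → M} (hφ : φ 0 = 0)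
    (θ : ℝ) : φ (discretizedDensity μ j θ) = ∑ k ∈ Finset.range (2 ^ j),
      (dyadicArc j k).indicator (fun _ => φ (2 ^ j * (μ (dyadicArc j k)).toReal)) θ :=
  Finset.apply_sum_indicator_const (pairwise_disjoint_dyadicArc j) _ hφ θ

lemma discretizedDensity_nonneg (θ : ℝ) : 0 ≤ discretizedDensity μ j θ :=
  Finset.sum_nonneg fun _ _ => indicator_nonneg (fun _ _ => by positivity) _

lemma measurable_discretizedDensity : Measurable (discretizedDensity μ j) :=
  Finset.measurable_sum _ fun k _ => measurable_const.indicator (measurableSet_dyadicArc j k)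

lemma lintegral_ofReal_discretizedDensity [IsFiniteMeasure μ] :
    ∫⁻ θ, ENNReal.ofReal (discretizedDensity μ j θ) ∂normalizedLebesgue
      = μ (Ico 0 (2 * Real.pi)) := by
  simp_rw [apply_discretizedDensity ENNReal.ofReal_zero]
  rw [lintegral_finsetSum _ fun k _ => measurable_const.indicator (measurableSet_dyadicArc j k),
    ← biUnion_dyadicArc j, measure_biUnion_finset ((pairwise_disjoint_dyadicArc j).set_pairwise _)
      fun k _ => measurableSet_dyadicArc j k]
  refine Finset.sum_congr rfl fun k hk => ?_
  rw [lintegral_indicator_const (measurableSet_dyadicArc j k),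
    normalizedLebesgue_dyadicArc (Finset.mem_range.1 hk), ENNReal.ofReal_mul (by positivity),
    ENNReal.ofReal_toReal (measure_ne_top _ _), ENNReal.ofReal_pow zero_le_two,
    ENNReal.ofReal_ofNat, mul_comm, ← mul_assoc, ENNReal.inv_mul_cancel (by positivity) (by simp),
    one_mul]

lemma integrable_log_discretizedDensity :
    Integrable (fun θ => Real.log (discretizedDensity μ j θ)) normalizedLebesgue := by
  simp_rw [apply_discretizedDensity Real.log_zero]
  exact integrable_finsetSum _ fun k _ =>
    (integrable_const _).indicator (measurableSet_dyadicArc j k)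

lemma integral_log_discretizedDensity :
    ∫ θ, Real.log (discretizedDensity μ j θ) ∂normalizedLebesgue
      = ∑ k ∈ Finset.range (2 ^ j), normalizedLebesgue.real (dyadicArc j k)
          * Real.log (2 ^ j * (μ (dyadicArc j k)).toReal) := by
  simp_rw [apply_discretizedDensity Real.log_zero]
  rw [integral_finsetSum _ fun k _ => (integrable_const _).indicator (measurableSet_dyadicArc j k)]
  exact Finset.sum_congr rfl fun k _ => integral_indicator_const _ (measurableSet_dyadicArc j k)

end DiscretizedDensity

theorem Hrev_discretizedDensity_le {μ : Measure ℝ} [IsFiniteMeasure μ] {w : ℝ → ℝ}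
    (hw : Measurable w) (hw0 : ∀ θ, 0 ≤ w θ)
    (hle : normalizedLebesgue.withDensity (fun θ => ENNReal.ofReal (w θ)) ≤ μ) (j : ℕ) :
    Hrev normalizedLebesgue (discretizedDensity μ j) ≤ Hrev normalizedLebesgue w := by
  conv_rhs => rw [Hrev]
  split_ifs with hcond
  swap
  · exact le_top
  obtain ⟨hpos, hint⟩ := hcond
  set ν := normalizedLebesgue
  set c : ℕ → ℝ := fun k => 2 ^ j * (μ (dyadicArc j k)).toReal
  have hwint : Integrable w ν := by
    refine (lintegral_ofReal_ne_top_iff_integrable hw.aestronglyMeasurable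
      (ae_of_all _ hw0)).1 (ne_top_of_le_ne_top (measure_ne_top μ univ) ?_)
    simpa [withDensity_apply _ MeasurableSet.univ] using hle univ
  have hmass {k : ℕ} (hk : k < 2 ^ j) :
      ∫ θ in dyadicArc j k, w θ ∂ν ≤ ν.real (dyadicArc j k) * c k := by
    rw [normalizedLebesgue_real_dyadicArc hk, inv_mul_cancel_left₀ (by positivity),
      integral_eq_lintegral_of_nonneg_ae (ae_of_all _ hw0) hw.aestronglyMeasurable,
      ← withDensity_apply _ (measurableSet_dyadicArc j k)]
    exact ENNReal.toReal_mono (measure_ne_top _ _) (hle _)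
  have hc {k : ℕ} (hk : k < 2 ^ j) : 0 < c k := by
    have hν0 : ν (dyadicArc j k) ≠ 0 := by simp [ν, normalizedLebesgue_dyadicArc hk]
    exact pos_of_mul_pos_right ((setIntegral_pos_of_ae_pos hν0 (ae_restrict_of_ae hpos)
      hwint.integrableOn).trans_le (hmass hk)) measureReal_nonneg
  have hDpos : ∀ᵐ θ ∂ν, 0 < discretizedDensity μ j θ := by
    filter_upwards [ae_mem_normalizedLebesgue] with θ hθ
    rw [discretizedDensity_of_mem (dyadicIndex_lt hθ) (mem_dyadicArc_dyadicIndex hθ.1)]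
    exact hc (dyadicIndex_lt hθ)
  rw [Hrev, if_pos ⟨hDpos, integrable_log_discretizedDensity⟩, EReal.coe_le_coe_iff,
    neg_le_neg_iff, integral_eq_sum_dyadicArc hint j, integral_log_discretizedDensity]
  refine Finset.sum_le_sum fun k hk => ?_
  exact setIntegral_log_le (measure_ne_top _ _) (hc (Finset.mem_range.1 hk))
    (ae_restrict_of_ae hpos) hwint.integrableOn hint.integrableOn (hmass (Finset.mem_range.1 hk))

def closedDyadicArc (j k : ℕ) : Set ℝ :=
  Icc (2 * Real.pi * k / 2 ^ j) (2 * Real.pi * (k + 1) / 2 ^ j)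

lemma closedDyadicArc_eq_closedBall (j k : ℕ) :
    closedDyadicArc j k
      = Metric.closedBall (2 * Real.pi * (k + 1 / 2) / 2 ^ j) (Real.pi / 2 ^ j) := by
  rw [closedDyadicArc, Real.closedBall_eq_Icc]
  congr 1 <;> ring

lemma dyadicArc_subset_closedDyadicArc (j k : ℕ) : dyadicArc j k ⊆ closedDyadicArc j k :=
  Ico_subset_Icc_self

lemma dyadicArc_ae_eq_closedDyadicArc (j k : ℕ) : dyadicArc j k =ᵐ[volume] closedDyadicArc j k :=
  Ico_ae_eq_Icc

lemma volume_closedDyadicArc (j k : ℕ) :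
    volume (closedDyadicArc j k) = ENNReal.ofReal (2 * Real.pi / 2 ^ j) := by
  rw [← measure_congr (dyadicArc_ae_eq_closedDyadicArc j k), volume_dyadicArc]

lemma tendsto_pi_div_two_pow : Tendsto (fun j : ℕ => Real.pi / 2 ^ j) atTop (𝓝[>] 0) := by
  refine tendsto_nhdsWithin_iff.2 ⟨?_, Eventually.of_forall fun j => by simp [Real.pi_pos]⟩
  simpa [div_eq_mul_inv] using (tendsto_pow_atTop_nhds_zero_of_lt_one (by norm_num : (0 : ℝ) ≤ 2⁻¹)
    (by norm_num)).const_mul Real.pi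

lemma ae_tendsto_two_pow_mul_measure_closedDyadicArc (ρ : Measure ℝ) [IsFiniteMeasure ρ] :
    ∀ᵐ θ, 0 ≤ θ → Tendsto (fun j => 2 ^ j * (ρ (closedDyadicArc j (dyadicIndex j θ))).toReal)
      atTop (𝓝 (2 * Real.pi * (ρ.rnDeriv volume θ).toReal)) := by
  filter_upwards [(IsUnifLocDoublingMeasure.vitaliFamily volume 1).ae_tendsto_rnDeriv ρ,
    Measure.rnDeriv_ne_top ρ volume] with θ hθ hfin hθ0
  have hmem (j : ℕ) : θ ∈ Metric.closedBall (2 * Real.pi * (dyadicIndex j θ + 1 / 2) / 2 ^ j)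
      (1 * (Real.pi / 2 ^ j)) := by
    rw [one_mul, ← closedDyadicArc_eq_closedBall]
    exact dyadicArc_subset_closedDyadicArc _ _ (mem_dyadicArc_dyadicIndex hθ0)
  have hdiv := ((ENNReal.tendsto_toReal hfin).comp (hθ.comp
    (IsUnifLocDoublingMeasure.tendsto_closedBall_filterAt volume _ _ tendsto_pi_div_two_pow
      (Eventually.of_forall hmem)))).const_mul (2 * Real.pi)
  refine hdiv.congr fun j => ?_
  simp only [comp_apply, ← closedDyadicArc_eq_closedBall, volume_closedDyadicArc,
    ENNReal.toReal_div, ENNReal.toReal_ofReal (by positivity : (0 : ℝ) ≤ 2 * Real.pi / 2 ^ j)]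
  field_simp

lemma rnDeriv_withDensity_normalizedLebesgue {w : ℝ → ℝ} (hw : Measurable w) :
    (normalizedLebesgue.withDensity fun θ => ENNReal.ofReal (w θ)).rnDeriv volume =ᵐ[volume]
      (Ico 0 (2 * Real.pi)).indicator
        fun θ => (ENNReal.ofReal (2 * Real.pi))⁻¹ * ENNReal.ofReal (w θ) := by
  have hg : Measurable fun θ => ENNReal.ofReal (w θ) := ENNReal.measurable_ofReal.comp hw
  have : normalizedLebesgue.withDensity (fun θ => ENNReal.ofReal (w θ)) = volume.withDensity
      ((Ico 0 (2 * Real.pi)).indicator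
        fun θ => (ENNReal.ofReal (2 * Real.pi))⁻¹ * ENNReal.ofReal (w θ)) := by
    rw [normalizedLebesgue, withDensity_smul_measure, withDensity_indicator measurableSet_Ico,
      ← withDensity_smul _ hg]
    rfl
  rw [this]
  exact Measure.rnDeriv_withDensity _ ((hg.const_mul _).indicator measurableSet_Ico)

theorem ae_tendsto_discretizedDensity {μ μs : Measure ℝ} [IsFiniteMeasure μ] {w : ℝ → ℝ}
    (hw : Measurable w) (hw0 : ∀ θ, 0 ≤ w θ)
    (hdecomp : μ = normalizedLebesgue.withDensity (fun θ => ENNReal.ofReal (w θ)) + μs)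
    (hsing : μs ⟂ₘ volume) :
    ∀ᵐ θ ∂normalizedLebesgue, Tendsto (fun j => discretizedDensity μ j θ) atTop (𝓝 (w θ)) := by
  set W := normalizedLebesgue.withDensity fun θ => ENNReal.ofReal (w θ)
  have : IsFiniteMeasure W := isFiniteMeasure_of_le μ (hdecomp ▸ Measure.le_add_right le_rfl)
  have : IsFiniteMeasure μs := isFiniteMeasure_of_le μ (hdecomp ▸ Measure.le_add_left le_rfl)
  have hWac : W ≪ volume :=
    (withDensity_absolutelyContinuous _ _).trans normalizedLebesgue_absolutelyContinuous
  have hW : ∀ᵐ θ, θ ∈ Ico 0 (2 * Real.pi) → Tendsto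
      (fun j => 2 ^ j * (W (dyadicArc j (dyadicIndex j θ))).toReal) atTop (𝓝 (w θ)) := by
    filter_upwards [ae_tendsto_two_pow_mul_measure_closedDyadicArc W,
      rnDeriv_withDensity_normalizedLebesgue hw] with θ hθ hrn hθS
    have hval : 2 * Real.pi * (W.rnDeriv volume θ).toReal = w θ := by
      rw [hrn, indicator_of_mem hθS, ENNReal.toReal_mul, ENNReal.toReal_inv,
        ENNReal.toReal_ofReal (by positivity), ENNReal.toReal_ofReal (hw0 θ)]
      field_simp
    rw [← hval]
    refine (hθ hθS.1).congr fun j => ?_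
    rw [measure_congr (hWac.ae_eq (dyadicArc_ae_eq_closedDyadicArc _ _))]
  -- `μs` may charge the endpoints of the arcs, so it is only bounded by its value on closed arcs.
  have hs : ∀ᵐ θ, 0 ≤ θ → Tendsto
      (fun j => 2 ^ j * (μs (dyadicArc j (dyadicIndex j θ))).toReal) atTop (𝓝 0) := by
    filter_upwards [ae_tendsto_two_pow_mul_measure_closedDyadicArc μs,
      hsing.rnDeriv_ae_eq_zero] with θ hθ hrn hθ0
    refine squeeze_zero (fun j => by positivity) (fun j => ?_) (by simpa [hrn] using hθ hθ0)
    gcongr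
    · exact measure_ne_top _ _
    · exact dyadicArc_subset_closedDyadicArc _ _
  filter_upwards [normalizedLebesgue_absolutelyContinuous.ae_le hW,
    normalizedLebesgue_absolutelyContinuous.ae_le hs, ae_mem_normalizedLebesgue] with θ hθW hθs hθ
  have hD (j : ℕ) : discretizedDensity μ j θ = 2 ^ j * (W (dyadicArc j (dyadicIndex j θ))).toReal
      + 2 ^ j * (μs (dyadicArc j (dyadicIndex j θ))).toReal := by
    rw [discretizedDensity_of_mem (dyadicIndex_lt hθ) (mem_dyadicArc_dyadicIndex hθ.1), hdecomp,
      Measure.add_apply, ENNReal.toReal_add (measure_ne_top _ _) (measure_ne_top _ _), mul_add]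
  simpa [hD] using (hθW hθ).add (hθs hθ.1)

theorem discretized_entropies_converge_general
    (μ μs : Measure ℝ) [IsProbabilityMeasure μ]
    (w : ℝ → ℝ) (hw : Measurable w) (hw0 : ∀ θ, 0 ≤ w θ)
    (ν : Measure ℝ)
    (hν : ν = (ENNReal.ofReal (2 * Real.pi))⁻¹ •
      ((volume : Measure ℝ).restrict (Set.Ico 0 (2 * Real.pi))))
    (hdecomp : μ = ν.withDensity (fun θ => ENNReal.ofReal (w θ)) + μs)
    (hsing : μs ⟂ₘ (volume : Measure ℝ)) :
    Filter.Tendsto (fun j : ℕ => Hrev ν (discretizedDensity μ j)) Filter.atTop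
      (nhds (Hrev ν w)) := by
  obtain rfl : ν = normalizedLebesgue := hν
  have hle : normalizedLebesgue.withDensity (fun θ => ENNReal.ofReal (w θ)) ≤ μ :=
    hdecomp ▸ Measure.le_add_right le_rfl
  refine tendsto_of_le_liminf_of_limsup_le ?_ ?_
  · exact Hrev_le_liminf (fun _ => measurable_discretizedDensity.aemeasurable)
      (fun _ => ae_of_all _ discretizedDensity_nonneg)
      (ae_tendsto_discretizedDensity hw hw0 hdecomp hsing)
      (fun _ => lintegral_ofReal_discretizedDensity.trans_le prob_le_one) ENNReal.one_ne_top
  · exact limsup_le_of_le (by isBoundedDefault)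
      (Eventually.of_forall (Hrev_discretizedDensity_le hw hw0 hle))

/-- Convergence of discretized entropies: `lim_{j→∞} H(ν | π_j(μ)) = H(ν | μ)`; in
particular the limit is independent of the singular part of `μ`. -/
theorem discretized_entropies_converge
    (μ μs : Measure ℝ) [IsProbabilityMeasure μ]
    (w : ℝ → ℝ) (hw : Measurable w) (hw0 : ∀ θ, 0 ≤ w θ)
    (ν : Measure ℝ)
    (hν : ν = (ENNReal.ofReal (2 * Real.pi))⁻¹ •
      ((volume : Measure ℝ).restrict (Set.Ico 0 (2 * Real.pi))))
    (hdecomp : μ = ν.withDensity (fun θ => ENNReal.ofReal (w θ)) + μs)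
    (hsing : μs ⟂ₘ (volume : Measure ℝ))
    (hcircle : μ (Set.Ico 0 (2 * Real.pi))ᶜ = 0) :
    Filter.Tendsto (fun j : ℕ => Hrev ν (discretizedDensity μ j)) Filter.atTop
      (nhds (Hrev ν w)) :=
  discretized_entropies_converge_general μ μs w hw hw0 ν hν hdecomp hsing
end
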